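/- Let φ : F(x,y) → ℤ be a homomorphism with φ(x) < 0 < φ(y), and let R = y·w·x·y⁻¹·w⁻¹·x⁻¹ be a cyclically reduced word of length 2n+2 where w is a word of length n−1 in positive letters {x, y}. Denote by S₁, ..., S_{2n+2} the proper initial segments of R. Then the maximum of {φ(S_i)} occurs only among indices 1 ≤ i ≤ n, and the minimum only among indices n+2 ≤ i ≤ 2n+1. -/
import Mathlib


/-- Brown's criterion bookkeeping for the relator `R = y w x y⁻¹ w⁻¹ x⁻¹`:
with `φ(x) < 0 < φ(y)` and `v i = φ(R_i)`, the partial sums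
`S i = φ(R₁⋯R_i)` attain their maximum only at indices `1 ≤ i ≤ n` and their
minimum only at indices `n+2 ≤ i ≤ 2n+1`. -/
theorem stmt_17 (n : ℕ) (hn : 1 ≤ n) (φx φy : ℤ) (hx : φx < 0) (hy : 0 < φy)
    (v : ℕ → ℤ)
    (hv1 : v 1 = φy)
    (hvw : ∀ j, 2 ≤ j → j ≤ n → v j = φx ∨ v j = φy)
    (hvn1 : v (n + 1) = φx)
    (hvn2 : v (n + 2) = -φy)
    (hvinv : ∀ j, 1 ≤ j → j ≤ n - 1 → v (n + 2 + j) = -v (n + 1 - j))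
    (hvlast : v (2 * n + 2) = -φx)
    (S : ℕ → ℤ) (hS : ∀ i, S i = ∑ k ∈ Finset.Icc 1 i, v k) :
    (∀ i, 1 ≤ i → i ≤ 2 * n + 2 →
      (∀ j, 1 ≤ j → j ≤ 2 * n + 2 → S j ≤ S i) → i ≤ n) ∧
    (∀ i, 1 ≤ i → i ≤ 2 * n + 2 →
      (∀ j, 1 ≤ j → j ≤ 2 * n + 2 → S i ≤ S j) →
      n + 2 ≤ i ∧ i ≤ 2 * n + 1) := by
  have hstep : ∀ i, S (i + 1) = S i + v (i + 1) := by
    intro i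
    rw [hS, hS, Finset.sum_Icc_succ_top (by omega : 1 ≤ i + 1)]
  have key : ∀ j, j ≤ n - 1 → S (n + 2 + j) = S (n - j) + φx - φy := by
    intro j
    induction j with
    | zero =>
      intro _
      have h1 := hstep n
      have h2 := hstep (n + 1)
      rw [hvn1] at h1
      rw [show n + 1 + 1 = n + 2 from rfl, hvn2] at h2
      simp only [Nat.add_zero, Nat.sub_zero]
      linarith
    | succ j ih =>
      intro hj
      have ih' := ih (by omega)
      have h1 := hstep (n + 2 + j)
      have hv := hvinv (j + 1) (by omega) hj
      rw [show n + 1 - (j + 1) = n - j from by omega,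
          show n + 2 + (j + 1) = n + 2 + j + 1 from by omega] at hv
      have h2 := hstep (n - j - 1)
      rw [show n - j - 1 + 1 = n - j from by omega] at h2
      rw [show n + 2 + (j + 1) = n + 2 + j + 1 from by omega,
          show n - (j + 1) = n - j - 1 from by omega]
      linarith
  have hS1 : S 1 = φy := by
    rw [show (1 : ℕ) = 0 + 1 from rfl, hstep 0, hS 0]
    simp [hv1]
  have hSn1 : S (n + 1) = S n + φx := by rw [hstep n, hvn1]
  have hSlast : S (2 * n + 2) = S (2 * n + 1) - φx := by
    have := hstep (2 * n + 1)
    rw [show 2 * n + 1 + 1 = 2 * n + 2 from by omega, hvlast] at this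
    linarith
  constructor
  · intro i hi1 hi2 hmax
    by_contra hcon
    push_neg at hcon
    rcases eq_or_lt_of_le (show n + 1 ≤ i from hcon) with h | h
    · -- i = n + 1
      have := hmax n hn (by omega)
      rw [← h, hSn1] at this
      linarith
    rcases eq_or_lt_of_le (show i ≤ 2 * n + 2 from hi2) with h2 | h2
    · -- i = 2n + 2
      have hk := key (n - 1) (le_refl _)
      rw [show n + 2 + (n - 1) = 2 * n + 1 from by omega,
          show n - (n - 1) = 1 from by omega] at hk
      have := hmax 1 (by omega) (by omega)
      rw [h2, hSlast, hk] at this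
      linarith
    · -- n + 2 ≤ i ≤ 2n + 1
      have hk := key (i - n - 2) (by omega)
      rw [show n + 2 + (i - n - 2) = i from by omega] at hk
      have := hmax (n - (i - n - 2)) (by omega) (by omega)
      rw [hk] at this
      linarith
  · intro i hi1 hi2 hmin
    by_contra hcon
    push_neg at hcon
    have hcase : i ≤ n + 1 ∨ i = 2 * n + 2 := by
      by_cases h : n + 2 ≤ i
      · right; omega
      · left; omega
    rcases hcase with h | h
    · rcases eq_or_lt_of_le h with h1 | h1
      · -- i = n + 1
        have hk := key 0 (by omega)
        simp only [Nat.add_zero, Nat.sub_zero] at hk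
        have := hmin (n + 2) (by omega) (by omega)
        rw [h1, hSn1, hk] at this
        linarith
      · -- 1 ≤ i ≤ n
        have hk := key (n - i) (by omega)
        rw [show n - (n - i) = i from by omega] at hk
        have := hmin (n + 2 + (n - i)) (by omega) (by omega)
        rw [hk] at this
        linarith
    · -- i = 2n + 2
      have := hmin (2 * n + 1) (by omega) (by omega)
      rw [h, hSlast] at this
      linarith
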